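/- arXiv:2409.18990 — 4 statements merged into one kernel-verified Lean document; each statement's English description precedes it below -/
import Mathlib

section
/- Let k, p, k_1 be real numbers and H_1 the degree-8 polynomial in x_{23} from the Einstein system for SO(k_1 + (p-1)k). Then H_1(1) = (k-1)(k - k_1)(kp - k + k_1 - 1)(kp - k + k_1)^2. In particular, if k ≥ 3, p ≥ 3, and k_1 > k, then H_1(1) < 0, and if k_1 = k then H_1(1) = 0. -/
set_option maxHeartbeats 1000000
set_option maxRecDepth 10000

/-- Coefficient of `x^8` in the polynomial `H₁`. -/
noncomputable def H1c8 (k p k1 : ℝ) : ℝ :=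
  k1^2*(p*k-2*k+k1)*(p^2*k^2-3*p*k^2+2*k^2-k1*k+k1*p*k+k1^2-k1)

/-- Coefficient of `x^7` in the polynomial `H₁`. -/
noncomputable def H1c7 (k p k1 : ℝ) : ℝ :=
  -2*k1^2*(p*k-k+k1-2)*(2*p^2*k^2-6*p*k^2+4*k^2-2*k1*k+2*k1*p*k+k1^2-k1)

/-- Coefficient of `x^6` in the polynomial `H₁`. -/
noncomputable def H1c6 (k p k1 : ℝ) : ℝ :=
  k1*(2*p^4*k^4-10*p^3*k^4+18*p^2*k^4-14*p*k^4+4*k^4+10*k1*p^3*k^3-4*p^3*k^3-28*k1*p^2*k^3+14*p^2*k^3-2*k1*k^3+20*k1*p*k^3-14*p*k^3+4*k^3+5*k1^2*k^2+15*k1^2*p^2*k^2-35*k1*p^2*k^2+4*p^2*k^2-41*k1*k^2-23*k1^2*p*k^2+79*k1*p*k^2-12*p*k^2+8*k^2-2*k1^3*k+39*k1^2*k-33*k1*k+8*k1^3*p*k-40*k1^2*p*k+28*k1*p*k+k1^4-16*k1^3+19*k1^2-4*k1)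

/-- Coefficient of `x^5` in the polynomial `H₁`. -/
noncomputable def H1c5 (k p k1 : ℝ) : ℝ :=
  -2*k1*(p*k-k+k1-2)*(4*p^3*k^3-12*p^2*k^3+10*p*k^3-2*k^3+6*k1*p^2*k^2-8*p^2*k^2-2*k1*k^2-4*k1*p*k^2+18*p*k^2-10*k^2+k1^2*k+15*k1*k+3*k1^2*p*k-19*k1*p*k+4*p*k-4*k-8*k1^2+8*k1)

/-- Coefficient of `x^4` in the polynomial `H₁`. -/
noncomputable def H1c4 (k p k1 : ℝ) : ℝ :=
  (p^5*k^5-5*p^4*k^5+10*p^3*k^5-10*p^2*k^5+5*p*k^5-k^5+14*k1*p^4*k^4-4*p^4*k^4-38*k1*p^3*k^4+14*p^3*k^4+24*k1*p^2*k^4-18*p^2*k^4-10*k1*k^4+10*k1*p*k^4+10*p*k^4-2*k^4+25*k1^2*p^3*k^3-83*k1*p^3*k^3+8*p^3*k^3+8*k1^2*k^3-36*k1^2*p^2*k^3+204*k1*p^2*k^3-20*p^2*k^3+37*k1*k^3+3*k1^2*p*k^3-158*k1*p*k^3+17*p*k^3-5*k^3-3*k1^3*k^2-38*k1^2*k^2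+14*k1^3*p^2*k^2-122*k1^2*p^2*k^2+152*k1*p^2*k^2-8*p^2*k^2+101*k1*k^2-2*k1^3*p*k^2+150*k1^2*p*k^2-252*k1*p*k^2+12*p*k^2-4*k^2+12*k1^3*k-116*k1^2*k+100*k1*k+2*k1^4*p*k-60*k1^3*p*k+174*k1^2*p*k-112*k1*p*k+4*p*k-4*k-4*k1^4+60*k1^3-76*k1^2+20*k1)

/-- Coefficient of `x^3` in the polynomial `H₁`. -/
noncomputable def H1c3 (k p k1 : ℝ) : ℝ :=
  -2*(p*k-k+k1-2)*(2*p^4*k^4-6*p^3*k^4+6*p^2*k^4-2*p*k^4+6*k1*p^3*k^3-8*p^3*k^3-2*k1*p^2*k^3+18*p^2*k^3+4*k1*k^3-8*k1*p*k^3-14*p*k^3+4*k^3-2*k1^2*k^2+3*k1^2*p^2*k^2-35*k1*p^2*k^2+12*p^2*k^2-2*k1*k^2+2*k1^2*p*k^2+34*k1*p*k^2-16*p*k^2+4*k^2+2*k1^2*k-34*k1*k-16*k1^2*p*k+48*k1*p*k-8*p*k+8*k+16*k1^2-16*k1)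

/-- Coefficient of `x^2` in the polynomial `H₁`. -/
noncomputable def H1c2 (k p k1 : ℝ) : ℝ :=
  (6*p^5*k^5-16*p^4*k^5+8*p^3*k^5+12*p^2*k^5-14*p*k^5+4*k^5+13*k1*p^4*k^4-49*p^4*k^4-15*k1*p^3*k^4+127*p^3*k^4-7*k1*p^2*k^4-109*p^2*k^4+2*k1*k^4+7*k1*p*k^4+33*p*k^4-2*k^4+8*k1^2*p^3*k^3-96*k1*p^3*k^3+140*p^3*k^3-4*k1^2*k^3+2*k1^2*p^2*k^3+117*k1*p^2*k^3-283*p^2*k^3-26*k1*k^3-6*k1^2*p*k^3+5*k1*p*k^3+169*p*k^3-26*k^3+32*k1^2*k^2+k1^3*p^2*k^2-56*k1^2*p^2*k^2+243*k1*p^2*k^2-188*p^2*k^2+44*k1*k^2+8*k1^2*p*k^2-268*k1*p*k^2+276*p*k^2-92*k^2-56*k1^2*k+164*k1*k-4*k1^3*p*k+120*k1^2*p*k-240*k1*p*k+108*p*k-92*k+4*k1^3-64*k1^2+76*k1-16)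

/-- Coefficient of `x^1` in the polynomial `H₁`. -/
noncomputable def H1c1 (k p k1 : ℝ) : ℝ :=
  -2*(k*p-2)*(p*k-k+k1-2)*(2*p*k-2*k+k1-1)*(p^2*k^2+p*k^2-2*k^2-6*p*k+4*k+4)

/-- Coefficient of `x^0` in the polynomial `H₁`. -/
noncomputable def H1c0 (k p k1 : ℝ) : ℝ :=
  (p*k-k+k1-1)*(p^2*k^2+p*k^2-2*k^2-6*p*k+4*k+4)^2

/-- The degree-8 polynomial `H₁` in `x` from the Einstein system for `SO(k1 + (p-1)k)`,
with the explicit coefficient list given in the paper. -/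
noncomputable def H1 (k p k1 x : ℝ) : ℝ :=
  H1c8 k p k1 * x^8 + H1c7 k p k1 * x^7 + H1c6 k p k1 * x^6 + H1c5 k p k1 * x^5
    + H1c4 k p k1 * x^4 + H1c3 k p k1 * x^3 + H1c2 k p k1 * x^2 + H1c1 k p k1 * x
    + H1c0 k p k1

theorem H1_at_one (k p k1 : ℝ) :
    H1 k p k1 1 = (k - 1) * (k - k1) * (k * p - k + k1 - 1) * (k * p - k + k1) ^ 2 := by
  simp only [H1, H1c8, H1c7, H1c6, H1c5, H1c4, H1c3, H1c2, H1c1, H1c0]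
  ring

theorem H1_at_one_neg {k p k1 : ℝ} (hk : 1 < k) (hp : 1 ≤ p) (hk1 : k < k1) :
    H1 k p k1 1 < 0 := by
  have hkp : 0 ≤ k * p - k := by nlinarith
  have hlin : 0 < k * p - k + k1 - 1 := by linarith
  have hsq : 0 < (k * p - k + k1) ^ 2 := pow_pos (by linarith) 2
  rw [H1_at_one]
  exact mul_neg_of_neg_of_pos
    (mul_neg_of_neg_of_pos (mul_neg_of_pos_of_neg (by linarith) (by linarith)) hlin) hsq

theorem H1_at_one_self (k p : ℝ) : H1 k p k 1 = 0 := by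
  rw [H1_at_one, sub_self, mul_zero, zero_mul, zero_mul]

/-- Evaluation of `H₁` at `1`, with the resulting sign analysis. -/
theorem stmt_8 (k p k1 : ℝ) :
    H1 k p k1 1 = (k - 1) * (k - k1) * (k * p - k + k1 - 1) * (k * p - k + k1) ^ 2 ∧
      (3 ≤ k → 3 ≤ p → k < k1 → H1 k p k1 1 < 0) ∧
      (k1 = k → H1 k p k1 1 = 0) := by
  refine ⟨H1_at_one k p k1, fun hk hp hk1 => H1_at_one_neg (by linarith) (by linarith) hk1, ?_⟩
  rintro rfl
  exact H1_at_one_self _ _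
end

section
/- Let k, p, k_1 be real numbers with k ≥ 3, p ≥ 3, and k_1 ≥ k, and let H_1 be the degree-8 polynomial in x_{23} from the Einstein system for SO(k_1 + (p-1)k). Then H_1(2) > 0. -/
set_option maxHeartbeats 1000000
set_option maxRecDepth 10000

/-- For `k ≥ 3`, `p ≥ 3`, `k₁ ≥ k`, we have `H₁(2) > 0`. -/
theorem stmt_9 (k p k1 : ℝ) (hk : 3 ≤ k) (hp : 3 ≤ p) (hk1 : k ≤ k1) :
    0 < H1 k p k1 2 := by
  obtain ⟨s, hs⟩ : ∃ s : ℝ, k = s^2 + 3 :=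
    ⟨Real.sqrt (k-3), by rw [Real.sq_sqrt (by linarith : (0:ℝ) ≤ k - 3)]; ring⟩
  obtain ⟨t, ht⟩ : ∃ t : ℝ, p = t^2 + 3 :=
    ⟨Real.sqrt (p-3), by rw [Real.sq_sqrt (by linarith : (0:ℝ) ≤ p - 3)]; ring⟩
  obtain ⟨u, hu⟩ : ∃ u : ℝ, k1 = u^2 + k :=
    ⟨Real.sqrt (k1-k), by rw [Real.sq_sqrt (by linarith : (0:ℝ) ≤ k1 - k)]; ring⟩
  have h : H1 k p k1 2 = 104336 + 96416*u^2 + 39924*u^4 + 9284*u^6 + 1184*u^8 + 64*u^10 + 157872*t^2 + 109920*t^2*u^2 + 31908*t^2*u^4 + 4680*t^2*u^6 + 288*t^2*u^8 + 94824*t^4 + 45729*t^4*u^2 + 7668*t^4*u^4 + 468*t^4*u^6 + 29403*t^6 + 9450*t^6*u^2 + 756*t^6*u^4 + 4374*t^8 + 729*t^8*u^2 + 243*t^10 + 162656*s^2 + 123880*s^2*u^2 + 40012*s^2*u^4 + 6408*s^2*u^6 + 416*s^2*u^8 + 249376*s^2*t^2 + 142804*s^2*t^2*u^2 + 32428*s^2*t^2*u^4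 + 3264*s^2*t^2*u^6 + 96*s^2*t^2*u^8 + 150183*s^2*t^4 + 58440*s^2*t^4*u^2 + 7524*s^2*t^4*u^4 + 312*s^2*t^4*u^6 + 47547*s^2*t^6 + 12312*s^2*t^6*u^2 + 756*s^2*t^6*u^4 + 7209*s^2*t^8 + 972*s^2*t^8*u^2 + 405*s^2*t^10 + 101508*s^4 + 59840*s^4*u^2 + 13340*s^4*u^4 + 1092*s^4*u^6 + 158164*s^4*t^2 + 70164*s^4*t^2*u^2 + 11068*s^4*t^2*u^4 + 568*s^4*t^2*u^6 + 95028*s^4*t^4 + 28010*s^4*t^4*u^2 + 2460*s^4*t^4*u^4 + 52*s^4*t^4*u^6 + 30726*s^4*t^6 + 6012*s^4*t^6*u^2 + 252*s^4*t^6*u^4 + 4752*s^4*t^8 + 486*s^4*t^8*u^2 + 270*s^4*t^10 + 31712*s^6 + 12872*s^6*u^2 + 1476*s^6*u^4 + 50420*s^6*t^2 + 15468*s^6*t^2*u^2 + 1268*s^6*t^2*u^4 + 30030*s^6*t^4 + 5968*s^6*t^4*u^2 + 268*s^6*t^4*u^4 + 9918*s^6*t^6 + 1304*s^6*t^6*u^2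 + 28*s^6*t^6*u^4 + 1566*s^6*t^8 + 108*s^6*t^8*u^2 + 90*s^6*t^10 + 4964*s^8 + 1040*s^8*u^2 + 8092*s^8*t^2 + 1292*s^8*t^2*u^2 + 4740*s^8*t^4 + 477*s^8*t^4*u^2 + 1599*s^8*t^6 + 106*s^8*t^6*u^2 + 258*s^8*t^8 + 9*s^8*t^8*u^2 + 15*s^8*t^10 + 312*s^10 + 524*s^10*t^2 + 299*s^10*t^4 + 103*s^10*t^6 + 17*s^10*t^8 + 1*s^10*t^10 := by
    subst hu; subst hs; subst ht
    simp only [H1, H1c8, H1c7, H1c6, H1c5, H1c4, H1c3, H1c2, H1c1, H1c0]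
    ring
  rw [h]
  positivity
end

section
/- Let k, p, k_1 be real numbers with k ≥ 3, p ≥ 3, and k_1 > k. Then the degree-8 polynomial H_1 (from the Einstein system for SO(k_1 + (p-1)k)) has at least two roots in the open interval (0, 2): one root α with 0 < α < 1 and one root β with 1 < β < 2. -/
set_option maxHeartbeats 1000000
set_option maxRecDepth 10000

/-!
At `x = 0` and `x = 1` the polynomial `H₁` factors: `H₁(0) = (k₁ + (p-1)k - 1) Q²` with
`Q = p²k² + pk² - 2k² - 6pk + 4k + 4 > 0`, and
`H₁(1) = -(k-1)(k₁-k)(k₁ + (p-1)k)²(k₁ + (p-1)k - 1)`, so `H₁(0) > 0 > H₁(1)`.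
Written in the nonnegative variables `k - 3`, `(p - 3)k` and `k₁ - k`, `H₁(2)` has only
positive coefficients. The intermediate value theorem on `[0, 1]` and `[1, 2]` gives the roots.
-/

theorem continuous_H1 (k p k1 : ℝ) : Continuous (H1 k p k1) := by
  unfold H1
  fun_prop

theorem H1_zero (k p k1 : ℝ) : H1 k p k1 0 = H1c0 k p k1 := by
  simp [H1]

theorem H1_one (k p k1 : ℝ) :
    H1 k p k1 1 = -((k - 1) * (k1 - k) * (k1 + (p - 1) * k) ^ 2 * (k1 + (p - 1) * k - 1)) := by
  unfold H1 H1c8 H1c7 H1c6 H1c5 H1c4 H1c3 H1c2 H1c1 H1c0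
  ring

theorem H1c0_pos {k p k1 : ℝ} (hk : 3 ≤ k) (hp : 3 ≤ p) (hk1 : k < k1) :
    0 < H1c0 k p k1 := by
  have hQ : 0 < p^2*k^2+p*k^2-2*k^2-6*p*k+4*k+4 := by
    nlinarith [mul_nonneg (sub_nonneg.2 hk) (sub_nonneg.2 hp),
      mul_nonneg (mul_nonneg (sub_nonneg.2 hk) (sub_nonneg.2 hp)) (sub_nonneg.2 hp)]
  unfold H1c0
  have hlin : 0 < p*k-k+k1-1 := by nlinarith
  positivity

theorem H1_one_neg {k p k1 : ℝ} (hk : 3 ≤ k) (hp : 3 ≤ p) (hk1 : k < k1) :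
    H1 k p k1 1 < 0 := by
  have hm : 0 ≤ (p - 1) * k := by nlinarith
  have : 0 < k - 1 := by linarith
  have : 0 < k1 - k := by linarith
  have : 0 < k1 + (p - 1) * k := by linarith
  have : 0 < k1 + (p - 1) * k - 1 := by linarith
  rw [H1_one, neg_lt_zero]
  positivity

theorem H1_two_pos {k p k1 : ℝ} (hk : 3 ≤ k) (hp : 3 ≤ p) (hk1 : k ≤ k1) :
    0 < H1 k p k1 2 := by
  obtain ⟨a, ha, rfl⟩ : ∃ a, 0 ≤ a ∧ k = a + 3 := ⟨k - 3, by linarith, by ring⟩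
  obtain ⟨c, hc, rfl⟩ : ∃ c, 0 ≤ c ∧ k1 = a + 3 + c :=
    ⟨k1 - (a + 3), by linarith, by ring⟩
  obtain ⟨d, hd, hd_eq⟩ : ∃ d, 0 ≤ d ∧ d = (p - 3) * (a + 3) := ⟨_, by nlinarith, rfl⟩
  have shifted : H1 (a + 3) p (a + 3 + c) 2 =
      104336
        + (162656*a + 52624*d + 96416*c)
        + (101508*a^2 + 65584*a*d + 123880*a*c + 10536*d^2 + 36640*d*c + 39924*c^2)
        + (31712*a^3 + 30860*a^2*d + 59840*a^2*c + 9663*a*d^2 + 35388*a*d*c + 40012*a*c^2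
          + 1089*d^3 + 5081*d^2*c + 10636*d*c^2 + 9284*c^3)
        + (4964*a^4 + 6520*a^3*d + 12872*a^3*c + 2946*a^2*d^2 + 11592*a^2*d*c + 13340*a^2*c^2
          + 672*a*d^3 + 3106*a*d^2*c + 7264*a*d*c^2 + 6408*a*c^3
          + 54*d^4 + 350*d^3*c + 852*d^2*c^2 + 1560*d*c^3 + 1184*c^4)
        + (312*a^5 + 524*a^4*d + 1040*a^4*c + 299*a^3*d^2 + 1292*a^3*d*c + 1476*a^3*c^2
          + 103*a^2*d^3 + 477*a^2*d^2*c + 1268*a^2*d*c^2 + 1092*a^2*c^3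
          + 17*a*d^4 + 106*a*d^3*c + 268*a*d^2*c^2 + 568*a*d*c^3 + 416*a*c^4
          + d^5 + 9*d^4*c + 28*d^3*c^2 + 52*d^2*c^3 + 96*d*c^4 + 64*c^5) := by
    subst hd_eq
    unfold H1 H1c8 H1c7 H1c6 H1c5 H1c4 H1c3 H1c2 H1c1 H1c0
    ring
  rw [shifted]
  positivity

/-- For `k ≥ 3`, `p ≥ 3`, `k₁ > k`, the polynomial `H₁` has a root `α ∈ (0,1)` and a
root `β ∈ (1,2)`. -/
theorem stmt_10 (k p k1 : ℝ) (hk : 3 ≤ k) (hp : 3 ≤ p) (hk1 : k < k1) :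
    ∃ α β : ℝ, 0 < α ∧ α < 1 ∧ H1 k p k1 α = 0 ∧
      1 < β ∧ β < 2 ∧ H1 k p k1 β = 0 := by
  have h0 : 0 < H1 k p k1 0 := H1_zero k p k1 ▸ H1c0_pos hk hp hk1
  have h1 : H1 k p k1 1 < 0 := H1_one_neg hk hp hk1
  have h2 : 0 < H1 k p k1 2 := H1_two_pos hk hp hk1.le
  obtain ⟨α, ⟨hα0, hα1⟩, hα⟩ :=
    intermediate_value_Ioo' zero_le_one (continuous_H1 k p k1).continuousOn ⟨h1, h0⟩
  obtain ⟨β, ⟨hβ1, hβ2⟩, hβ⟩ :=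
    intermediate_value_Ioo one_le_two (continuous_H1 k p k1).continuousOn ⟨h1, h2⟩
  exact ⟨α, β, hα0, hα1, hα, hβ1, hβ2, hβ⟩
end

section
/- Let k, p, k_1 be real numbers with k ≥ 3, p ≥ 3, and k_1 ≥ 10kp. Then H_1(2/3) > 0, where H_1 is the degree-8 polynomial from the Einstein system for SO(k_1 + (p-1)k). -/
set_option maxHeartbeats 1000000
set_option maxRecDepth 10000

/-!
Substitute `a = k - 3`, `b = p - 3`, `c = k₁ - 10kp`, all nonnegative on the region in question.
Then `3⁸ · H₁(2/3) = ∑_{j ≤ 4} p_j(a, b) c^j + 64 c⁵` where every `p_j` has nonnegative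
coefficients and a positive constant term, so `H₁(2/3)` is positive.
-/

noncomputable def H1TwoThirdsCoeff0 (a b : ℝ) : ℝ :=
  291848917536 + 543815227764 * b + 439706500272 * a + 404538563655 * b^2 + 840207388320 * a * b
    + 261601463052 * a^2 + 150194316987 * b^3 + 639093441636 * a * b^2 + 515627980956 * a^2 * b
    + 76557997800 * a^3 + 27834664473 * b^4 + 242027588979 * a * b^3 + 402496759170 * a^2 * b^2
    + 156904304004 * a^3 * b + 10964539404 * a^4 + 2060137233 * b^5 + 45656436294 * a * b^4
    + 155804805126 * a^2 * b^3 + 126263852928 * a^3 * b^2 + 23633211600 * a^4 * b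
    + 609894432 * a^5 + 3433562055 * a * b^5 + 29947843422 * a^2 * b^4 + 50080603950 * a^3 * b^3
    + 19719309159 * a^4 * b^2 + 1406250300 * a^5 * b + 2289041370 * a^2 * b^5
    + 9819354216 * a^3 * b^4 + 8036819231 * a^4 * b^3 + 1225798700 * a^5 * b^2
    + 763013790 * a^3 * b^5 + 1609348993 * a^4 * b^4 + 515065215 * a^5 * b^3
    + 127168965 * a^4 * b^5 + 105475930 * a^5 * b^4 + 8477931 * a^5 * b^5

noncomputable def H1TwoThirdsCoeff1 (a b : ℝ) : ℝ :=
  17782338564 + 26268727464 * b + 21806079336 * a + 14535152973 * b^2 + 33001360668 * a * b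
    + 9937811016 * a^2 + 3570582762 * b^3 + 18663109560 * a * b^2 + 15479652636 * a^2 * b
    + 1990966824 * a^3 + 328573665 * b^4 + 4676063040 * a * b^3 + 8971418610 * a^2 * b^2
    + 3210990756 * a^3 * b + 147552132 * a^4 + 438098220 * a * b^4 + 2295674532 * a^2 * b^3
    + 1913265216 * a^3 * b^2 + 248336188 * a^4 * b + 219049110 * a^2 * b^4
    + 500737232 * a^3 * b^3 + 152710729 * a^4 * b^2 + 48677580 * a^3 * b^4
    + 40943714 * a^4 * b^3 + 4056465 * a^4 * b^4

noncomputable def H1TwoThirdsCoeff2 (a b : ℝ) : ℝ :=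
  422648136 + 465149628 * b + 393679584 * a + 170527896 * b^2 + 444605220 * a * b
    + 121422408 * a^2 + 20825316 * b^3 + 166885128 * a * b^2 + 141302436 * a^2 * b
    + 12385712 * a^3 + 20825316 * a * b^3 + 54414120 * a^2 * b^2 + 14927996 * a^3 * b
    + 6941772 * a^2 * b^3 + 5911096 * a^3 * b^2 + 771308 * a^3 * b^3

noncomputable def H1TwoThirdsCoeff3 (a b : ℝ) : ℝ :=
  4925700 + 3595656 * b + 3088712 * a + 655956 * b^2 + 2327872 * a * b + 481732 * a^2
    + 437304 * a * b^2 + 376440 * a^2 * b + 72884 * a^2 * b^2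

noncomputable def H1TwoThirdsCoeff4 (a b : ℝ) : ℝ :=
  28256 + 10272 * b + 8928 * a + 3424 * a * b

noncomputable def H1TwoThirdsShifted (a b c : ℝ) : ℝ :=
  H1TwoThirdsCoeff0 a b + H1TwoThirdsCoeff1 a b * c + H1TwoThirdsCoeff2 a b * c^2
    + H1TwoThirdsCoeff3 a b * c^3 + H1TwoThirdsCoeff4 a b * c^4 + 64 * c^5

theorem three_pow_eight_mul_H1_two_thirds (k p k1 : ℝ) :
    3^8 * H1 k p k1 (2/3) = H1TwoThirdsShifted (k - 3) (p - 3) (k1 - 10 * k * p) := by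
  unfold H1 H1c8 H1c7 H1c6 H1c5 H1c4 H1c3 H1c2 H1c1 H1c0 H1TwoThirdsShifted H1TwoThirdsCoeff0
    H1TwoThirdsCoeff1 H1TwoThirdsCoeff2 H1TwoThirdsCoeff3 H1TwoThirdsCoeff4
  ring

theorem H1TwoThirdsShifted_pos {a b c : ℝ} (ha : 0 ≤ a) (hb : 0 ≤ b) (hc : 0 ≤ c) :
    0 < H1TwoThirdsShifted a b c := by
  unfold H1TwoThirdsShifted H1TwoThirdsCoeff0 H1TwoThirdsCoeff1 H1TwoThirdsCoeff2
    H1TwoThirdsCoeff3 H1TwoThirdsCoeff4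
  positivity

/-- For `k ≥ 3`, `p ≥ 3`, `k₁ ≥ 10kp`, we have `H₁(2/3) > 0`. -/
theorem stmt_14 (k p k1 : ℝ) (hk : 3 ≤ k) (hp : 3 ≤ p) (hk1 : 10 * k * p ≤ k1) :
    0 < H1 k p k1 (2 / 3) := by
  have h := H1TwoThirdsShifted_pos (sub_nonneg.2 hk) (sub_nonneg.2 hp) (sub_nonneg.2 hk1)
  rw [← three_pow_eight_mul_H1_two_thirds] at h
  exact pos_of_mul_pos_right h (by norm_num)
end
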